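/- Let γ_n : I → ℝ^{1+n} be a sequence of future-directed causal curves, each achronal (for no s, s' ∈ I does γ_n(s') lie in I^+(γ_n(s))), converging uniformly on compact subsets of I to a future-directed causal curve γ : I → ℝ^{1+n}. Then γ is achronal. -/

import Mathlib

open Set MeasureTheory Filter Topology
open scoped RealInnerProductSpace

noncomputable section

/-- Minkowski space-time `ℝ^{1+n} = ℝ × ℝ^n`. -/
abbrev Mink (n : ℕ) : Type := ℝ × EuclideanSpace ℝ (Fin n)

/-- A vector is timelike future-directed if `v⁰ > |v⃗|`. -/
def timelikeFD {n : ℕ} (v : Mink n) : Prop := ‖v.2‖ < v.1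

/-- A vector is causal future-directed if `v ≠ 0` and `v⁰ ≥ |v⃗|`. -/
def causalFD {n : ℕ} (v : Mink n) : Prop := v ≠ 0 ∧ ‖v.2‖ ≤ v.1

/-- A vector is null future-directed if `v ≠ 0` and `v⁰ = |v⃗|`. -/
def nullFD {n : ℕ} (v : Mink n) : Prop := v ≠ 0 ∧ ‖v.2‖ = v.1

/-- A vector is causal past-directed if `-v` is causal future-directed. -/
def causalPD {n : ℕ} (v : Mink n) : Prop := causalFD (-v)

/-- The Minkowski bilinear form `η(x,y) = -x⁰y⁰ + ⟨x⃗,y⃗⟩`. -/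
def minkBF {n : ℕ} (x y : Mink n) : ℝ := -(x.1 * y.1) + ⟪x.2, y.2⟫

/-- The Euclidean norm on `ℝ^{1+n}`. -/
def eNorm {n : ℕ} (v : Mink n) : ℝ := Real.sqrt (v.1 ^ 2 + ‖v.2‖ ^ 2)

/-- A future-directed causal curve defined on `S ⊆ ℝ`: locally Lipschitz, with
almost-everywhere derivative causal future-directed. -/
def IsCausalCurveOn {n : ℕ} (γ : ℝ → Mink n) (S : Set ℝ) : Prop :=
  (∀ a b : ℝ, Icc a b ⊆ S → ∃ K : NNReal, LipschitzOnWith K γ (Icc a b)) ∧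
  (∀ᵐ s ∂(volume.restrict S), ∃ v : Mink n, HasDerivWithinAt γ v S s ∧ causalFD v)

/-- A future-directed timelike curve defined on `S ⊆ ℝ`. -/
def IsTimelikeCurveOn {n : ℕ} (γ : ℝ → Mink n) (S : Set ℝ) : Prop :=
  (∀ a b : ℝ, Icc a b ⊆ S → ∃ K : NNReal, LipschitzOnWith K γ (Icc a b)) ∧
  (∀ᵐ s ∂(volume.restrict S), ∃ v : Mink n, HasDerivWithinAt γ v S s ∧ timelikeFD v)

/-- A past-directed causal curve defined on `S ⊆ ℝ`. -/
def IsPastCausalCurveOn {n : ℕ} (γ : ℝ → Mink n) (S : Set ℝ) : Prop :=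
  (∀ a b : ℝ, Icc a b ⊆ S → ∃ K : NNReal, LipschitzOnWith K γ (Icc a b)) ∧
  (∀ᵐ s ∂(volume.restrict S), ∃ v : Mink n, HasDerivWithinAt γ v S s ∧ causalPD v)

/-- `chron p q`: there is a future-directed timelike curve from `p` to `q`. -/
def chron {n : ℕ} (p q : Mink n) : Prop :=
  ∃ (a b : ℝ) (γ : ℝ → Mink n), a < b ∧ IsTimelikeCurveOn γ (Icc a b) ∧ γ a = p ∧ γ b = q

/-- `caus p q`: `q = p`, or there is a future-directed causal curve from `p` to `q`. -/
def caus {n : ℕ} (p q : Mink n) : Prop :=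
  p = q ∨ ∃ (a b : ℝ) (γ : ℝ → Mink n), a < b ∧ IsCausalCurveOn γ (Icc a b) ∧ γ a = p ∧ γ b = q

/-- `causPast p q`: `q = p`, or there is a past-directed causal curve from `p` to `q`. -/
def causPast {n : ℕ} (p q : Mink n) : Prop :=
  p = q ∨ ∃ (a b : ℝ) (γ : ℝ → Mink n), a < b ∧ IsPastCausalCurveOn γ (Icc a b) ∧ γ a = p ∧ γ b = q

/-- The timelike future `I⁺(U)`. -/
def Iplus {n : ℕ} (U : Set (Mink n)) : Set (Mink n) := {q | ∃ p ∈ U, chron p q}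

/-- The causal future `J⁺(U)`. -/
def Jplus {n : ℕ} (U : Set (Mink n)) : Set (Mink n) := {q | ∃ p ∈ U, caus p q}

/-- The causal past `J⁻(U)`. -/
def Jminus {n : ℕ} (U : Set (Mink n)) : Set (Mink n) := {q | ∃ p ∈ U, causPast p q}

/-- An inextendible future-directed timelike curve: defined on all of `ℝ`, locally
Lipschitz, parameterized by Euclidean arclength, with a.e. timelike future derivative. -/
def IsInextTimelike {n : ℕ} (γ : ℝ → Mink n) : Prop :=
  LocallyLipschitz γ ∧
  ∀ᵐ s : ℝ, ∃ v : Mink n, HasDerivAt γ v s ∧ timelikeFD v ∧ eNorm v = 1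

/-!
A point `q` lies in the timelike future of `p` exactly when `q - p` lies in the open cone
`v⁰ > |v⃗|`: the straight segment realises one direction, and for the other, each functional
`v ↦ v⁰ - ⟨u, v⃗⟩` with `|u| ≤ 1` is positive on the velocity of a timelike curve, so by the
fundamental theorem of calculus for Lipschitz functions it is positive on `q - p`.
Achronality of a pair of parameters is therefore a closed condition on the pair of points,
and it passes to pointwise limits.
-/

theorem LipschitzOnWith.lt_of_ae_hasDerivWithinAt_pos {K : NNReal} {g : ℝ → ℝ} {a b : ℝ}
    (hab : a < b) (hg : LipschitzOnWith K g (Icc a b))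
    (hd : ∀ᵐ s ∂(volume.restrict (Icc a b)), ∃ d, HasDerivWithinAt g d (Icc a b) s ∧ 0 < d) :
    g a < g b := by
  have hac : AbsolutelyContinuousOnInterval g a b := by
    rw [← uIcc_of_le hab.le] at hg
    exact hg.absolutelyContinuousOnInterval
  have hpos : ∀ᵐ s ∂(volume.restrict (Ioc a b)), 0 < deriv g s := by
    rw [← Measure.restrict_congr_set Ioo_ae_eq_Ioc]
    filter_upwards [ae_restrict_of_ae_restrict_of_subset Ioo_subset_Icc_self hd,
      ae_restrict_mem measurableSet_Ioo] with s ⟨d, hgd, hd_pos⟩ hs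
    rwa [(hgd.hasDerivAt (Icc_mem_nhds hs.1 hs.2)).deriv]
  have hint : 0 < ∫ s in a..b, deriv g s := by
    rw [intervalIntegral.integral_of_le hab.le, integral_pos_iff_support_of_nonneg_ae
      (hpos.mono fun s hs => hs.le) hac.intervalIntegrable_deriv.1]
    calc (0 : ENNReal) < volume.restrict (Ioc a b) univ := by simp [hab]
      _ ≤ volume.restrict (Ioc a b) (Function.support (deriv g)) :=
        measure_mono_ae (hpos.mono fun s hs _ => hs.ne')
  linarith [hac.integral_deriv_eq_sub]

section Minkowski

variable {n : ℕ}

theorem timelikeFD_iff_forall_inner_lt {v : Mink n} :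
    timelikeFD v ↔ ∀ u : EuclideanSpace ℝ (Fin n), ‖u‖ ≤ 1 → ⟪u, v.2⟫ < v.1 := by
  refine ⟨fun hv u hu => ?_, fun h => ?_⟩
  · calc ⟪u, v.2⟫ ≤ ‖u‖ * ‖v.2‖ := real_inner_le_norm u v.2
      _ ≤ ‖v.2‖ := mul_le_of_le_one_left (norm_nonneg _) hu
      _ < v.1 := hv
  · have hunit : ‖‖v.2‖⁻¹ • v.2‖ ≤ 1 := by
      rw [norm_smul, norm_inv, norm_norm]
      exact inv_mul_le_one
    have hinner : ⟪‖v.2‖⁻¹ • v.2, v.2⟫ = ‖v.2‖ := by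
      rw [real_inner_smul_left, real_inner_self_eq_norm_sq, sq, ← mul_assoc, inv_mul_mul_self]
    show ‖v.2‖ < v.1
    exact hinner ▸ h _ hunit

theorem isOpen_setOf_timelikeFD : IsOpen {v : Mink n | timelikeFD v} :=
  isOpen_lt (continuous_norm.comp continuous_snd) continuous_fst

theorem timelikeFD_sub_of_chron {p q : Mink n} (h : chron p q) : timelikeFD (q - p) := by
  obtain ⟨a, b, γ, hab, ⟨hlip, hderiv⟩, rfl, rfl⟩ := h
  obtain ⟨K, hK⟩ := hlip a b Subset.rfl
  refine timelikeFD_iff_forall_inner_lt.2 fun u hu => ?_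
  let L : Mink n →L[ℝ] ℝ :=
    .fst ℝ ℝ _ - (innerSL ℝ u).comp (.snd ℝ ℝ (EuclideanSpace ℝ (Fin n)))
  have hL : ∀ v, L v = v.1 - ⟪u, v.2⟫ := fun v => rfl
  have hmono := (L.lipschitz.comp_lipschitzOnWith hK).lt_of_ae_hasDerivWithinAt_pos hab <|
    hderiv.mono fun s ⟨v, hγv, hv⟩ => ⟨L v, L.hasFDerivAt.comp_hasDerivWithinAt s hγv,
      (hL v).symm ▸ sub_pos.2 (timelikeFD_iff_forall_inner_lt.1 hv u hu)⟩
  simp only [Function.comp_apply, hL] at hmono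
  simp only [Prod.fst_sub, Prod.snd_sub, inner_sub_right]
  linarith

theorem chron_of_timelikeFD_sub {p q : Mink n} (h : timelikeFD (q - p)) : chron p q := by
  have hlip : LipschitzWith _ fun t : ℝ => p + t • (q - p) :=
    (LipschitzWith.const p).add (ContinuousLinearMap.toSpanSingleton ℝ (q - p)).lipschitz
  refine ⟨0, 1, fun t => p + t • (q - p), one_pos,
    ⟨fun _ _ _ => ⟨_, hlip.lipschitzOnWith⟩, ?_⟩, by simp, by simp⟩
  refine .of_forall fun s => ⟨q - p, HasDerivAt.hasDerivWithinAt ?_, h⟩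
  simpa using ((hasDerivAt_id s).smul_const (q - p)).const_add p

theorem chron_iff_timelikeFD_sub {p q : Mink n} : chron p q ↔ timelikeFD (q - p) :=
  ⟨timelikeFD_sub_of_chron, chron_of_timelikeFD_sub⟩

end Minkowski

theorem limit_of_achronal_causal_curves_is_achronal_general (n : ℕ) (I : Set ℝ)
    (γs : ℕ → ℝ → Mink n) (γ : ℝ → Mink n)
    (hach : ∀ m : ℕ, ∀ s ∈ I, ∀ s' ∈ I, ¬ chron (γs m s) (γs m s'))
    (hconv : ∀ K : Set ℝ, K ⊆ I → IsCompact K →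
      TendstoUniformlyOn (fun m => γs m) γ atTop K) :
    ∀ s ∈ I, ∀ s' ∈ I, ¬ chron (γ s) (γ s') := by
  intro s hs s' hs' hchron
  have hpointwise : ∀ t ∈ I, Tendsto (fun m => γs m t) atTop (𝓝 (γ t)) := fun t ht =>
    (hconv {t} (singleton_subset_iff.2 ht) isCompact_singleton).tendsto_at rfl
  have hlim := (hpointwise s' hs').sub (hpointwise s hs)
  obtain ⟨m, hm⟩ := (hlim.eventually (isOpen_setOf_timelikeFD.mem_nhds
    (chron_iff_timelikeFD_sub.1 hchron))).exists
  exact hach m s hs s' hs' (chron_iff_timelikeFD_sub.2 hm)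

/-- a locally uniform limit of achronal future-directed causal curves
which is itself a future-directed causal curve is achronal. -/
theorem limit_of_achronal_causal_curves_is_achronal (n : ℕ) (I : Set ℝ)
    (hI : I.OrdConnected)
    (γs : ℕ → ℝ → Mink n) (γ : ℝ → Mink n)
    (hγs : ∀ m : ℕ, IsCausalCurveOn (γs m) I)
    (hach : ∀ m : ℕ, ∀ s ∈ I, ∀ s' ∈ I, ¬ chron (γs m s) (γs m s'))
    (hγ : IsCausalCurveOn γ I)
    (hconv : ∀ K : Set ℝ, K ⊆ I → IsCompact K →
      TendstoUniformlyOn (fun m => γs m) γ atTop K) :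
    ∀ s ∈ I, ∀ s' ∈ I, ¬ chron (γ s) (γ s') :=
  limit_of_achronal_causal_curves_is_achronal_general n I γs γ hach hconv
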